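/- If x ∈ (0,1) is a dyadic rational, then lim_{h→0} (T(x+h) - T(x))/(|h| log₂(1/|h|)) = 1, where T is the Takagi function. -/

import Mathlib

/-! The self-similarity `T y = T_N y + T (φ^N y) / 2^N`, with `T_N` the `N`-th partial sum, reduces
everything to the behaviour of `T` at `0`: for `0 < t ≤ 1` the first `⌊log₂ (1/t)⌋` terms of the
series at `t` all equal `t` and the remaining ones sum to less than `2t`, so
`T t = t log₂ (1/t) + O(t)`. At a dyadic `x ∈ (0,1)` some iterate is a cusp, `φ^M (x + h) = 2^M |h|`
for small `h`, while `T_M` is `M`-Lipschitz; hence `T (x + h) - T x = |h| log₂ (1/|h|) + O(|h|)`. -/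

open Filter Topology Set

noncomputable def tent (x : ℝ) : ℝ := min (2*x) (2-2*x)

noncomputable def takagi (x : ℝ) : ℝ := ∑' n : ℕ, tent^[n+1] x / 2^(n+1)

lemma tent_of_le_half {u : ℝ} (hu : u ≤ 1/2) : tent u = 2*u := min_eq_left (by linarith)

lemma tent_of_half_le {u : ℝ} (hu : 1/2 ≤ u) : tent u = 2-2*u := min_eq_right (by linarith)

lemma lipschitzWith_tent : LipschitzWith 2 tent := by
  have hmul : LipschitzWith 2 fun x : ℝ => 2 * x := by
    simpa using lipschitzWith_smul (β := ℝ) (2:ℝ)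
  show LipschitzWith 2 fun x => min (2*x) (2-2*x)
  simpa using hmul.min ((LipschitzWith.const 2).sub hmul)

lemma abs_iterate_tent_sub_le (n : ℕ) (a b : ℝ) :
    |tent^[n] a - tent^[n] b| ≤ 2^n * |a - b| := by
  simpa [Real.dist_eq] using (lipschitzWith_tent.iterate n).dist_le_mul a b

lemma mapsTo_tent : MapsTo tent (Icc 0 1) (Icc 0 1) := by
  rintro u ⟨h0, h1⟩
  rcases le_total u (1/2) with h | h
  · rw [tent_of_le_half h]; constructor <;> linarith
  · rw [tent_of_half_le h]; constructor <;> linarith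

lemma tent_mem_Ioo {u : ℝ} (hu : u ∈ Ioo 0 1) (hu2 : u ≠ 1/2) : tent u ∈ Ioo 0 1 := by
  obtain ⟨h0, h1⟩ := hu
  rcases hu2.lt_or_gt with h | h
  · rw [tent_of_le_half h.le]; constructor <;> linarith
  · rw [tent_of_half_le h.le]; constructor <;> linarith

lemma iterate_tent_of_two_pow_mul_le_one {n : ℕ} {u : ℝ} (hu : 0 ≤ u) (hn : 2^n * u ≤ 1) :
    tent^[n] u = 2^n * u := by
  induction n generalizing u with
  | zero => simp
  | succ n ih =>
    have hu2 : u ≤ 1/2 := by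
      have : (2:ℝ) ≤ 2^(n+1) := le_self_pow₀ one_le_two n.succ_ne_zero
      nlinarith
    rw [Function.iterate_succ_apply, tent_of_le_half hu2,
      ih (by linarith) (by rw [pow_succ] at hn; linarith), pow_succ]
    ring

lemma iterate_tent_zero (n : ℕ) : tent^[n] 0 = 0 :=
  Function.iterate_fixed (by simp [tent]) n

noncomputable def takagiPartial (N : ℕ) (x : ℝ) : ℝ :=
  ∑ n ∈ Finset.range N, tent^[n+1] x / 2^(n+1)

lemma takagi_term_mem_Icc {y : ℝ} (hy : y ∈ Icc (0:ℝ) 1) (n : ℕ) :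
    tent^[n+1] y / 2^(n+1) ∈ Icc 0 (1 / 2 / 2^n) := by
  have := (mapsTo_tent.iterate (n+1)) hy
  rw [div_div, ← pow_succ']
  exact ⟨div_nonneg this.1 (by positivity), div_le_div_of_nonneg_right this.2 (by positivity)⟩

lemma summable_takagi {y : ℝ} (hy : y ∈ Icc (0:ℝ) 1) :
    Summable fun n : ℕ => tent^[n+1] y / 2^(n+1) :=
  (summable_geometric_two' 1).of_nonneg_of_le (fun n => (takagi_term_mem_Icc hy n).1)
    (fun n => (takagi_term_mem_Icc hy n).2)

lemma takagi_mem_Icc {y : ℝ} (hy : y ∈ Icc (0:ℝ) 1) : takagi y ∈ Icc (0:ℝ) 1 := by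
  refine ⟨tsum_nonneg fun n => (takagi_term_mem_Icc hy n).1, ?_⟩
  rw [← tsum_geometric_two' 1]
  exact (summable_takagi hy).tsum_le_tsum (fun n => (takagi_term_mem_Icc hy n).2)
    (summable_geometric_two' 1)

lemma takagi_zero : takagi 0 = 0 := by simp [takagi, iterate_tent_zero]

lemma takagi_eq_takagiPartial_add {y : ℝ} (hy : y ∈ Icc (0:ℝ) 1) (N : ℕ) :
    takagi y = takagiPartial N y + takagi (tent^[N] y) / 2^N := by
  rw [takagi, takagiPartial, ← (summable_takagi hy).sum_add_tsum_nat_add N, takagi,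
    ← tsum_div_const]
  congr 1
  refine tsum_congr fun n => ?_
  rw [← Function.iterate_add_apply, div_div, ← pow_add]
  ring_nf

lemma takagiPartial_of_two_pow_mul_le_one {N : ℕ} {t : ℝ} (ht : 0 ≤ t) (hN : 2^N * t ≤ 1) :
    takagiPartial N t = N * t := by
  calc takagiPartial N t = ∑ _n ∈ Finset.range N, t := Finset.sum_congr rfl fun n hn => by
        have hle : (2:ℝ)^(n+1) * t ≤ 1 :=
          le_trans (by gcongr; exacts [one_le_two, Finset.mem_range.mp hn]) hN
        rw [iterate_tent_of_two_pow_mul_le_one ht hle]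
        field_simp
    _ = N * t := by simp

lemma abs_takagiPartial_sub_le (N : ℕ) (a b : ℝ) :
    |takagiPartial N a - takagiPartial N b| ≤ N * |a - b| := by
  rw [takagiPartial, takagiPartial, ← Finset.sum_sub_distrib]
  refine (Finset.abs_sum_le_sum_abs _ _).trans ?_
  refine (Finset.sum_le_card_nsmul _ _ |a - b| fun n _ => ?_).trans_eq (by simp)
  rw [← sub_div, abs_div, abs_pow, abs_two, div_le_iff₀ (by positivity), mul_comm]
  exact abs_iterate_tent_sub_le _ a b

lemma abs_takagi_sub_mul_logb_le {t : ℝ} (ht : 0 < t) (ht1 : t ≤ 1) :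
    |takagi t - t * Real.logb 2 (1/t)| ≤ 3 * t := by
  set L := Real.logb 2 (1/t)
  set K := ⌊L⌋₊
  have hL : 0 ≤ L := Real.logb_nonneg one_lt_two (by rw [le_div_iff₀ ht]; linarith)
  have h2L : (2:ℝ) ^ L = 1/t := Real.rpow_logb (by norm_num) (by norm_num) (by positivity)
  have hKL : (K:ℝ) ≤ L := Nat.floor_le hL
  have hLK : L < K + 1 := Nat.lt_floor_add_one L
  have hKt : 2^K * t ≤ 1 := by
    have : (2:ℝ)^K ≤ 1/t := by
      rw [← h2L, ← Real.rpow_natCast]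
      exact Real.rpow_le_rpow_of_exponent_le one_le_two hKL
    rwa [le_div_iff₀ ht] at this
  have hKt' : 1 < 2 * 2^K * t := by
    have : 1/t < 2 * 2^K := by
      rw [← h2L, ← pow_succ', ← Real.rpow_natCast, Nat.cast_succ]
      exact Real.rpow_lt_rpow_of_exponent_lt one_lt_two hLK
    rwa [div_lt_iff₀ ht] at this
  obtain ⟨hrest₀, hrest₁⟩ := takagi_mem_Icc ((mapsTo_tent.iterate K) ⟨ht.le, ht1⟩)
  have hrest_nonneg : 0 ≤ takagi (tent^[K] t) / 2^K := div_nonneg hrest₀ (by positivity)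
  have hrest_le : takagi (tent^[K] t) / 2^K ≤ 2 * t := by
    rw [div_le_iff₀ (by positivity)]
    linarith
  rw [takagi_eq_takagiPartial_add ⟨ht.le, ht1⟩ K, takagiPartial_of_two_pow_mul_le_one ht.le hKt,
    abs_le]
  constructor <;> nlinarith

lemma abs_tent_add_sub_tent {x h : ℝ} (hh : |h| ≤ |x - 1/2|) :
    |tent (x + h) - tent x| = 2 * |h| := by
  have := le_abs_self h
  have := neg_abs_le h
  rcases le_total x (1/2) with hx | hx
  · rw [abs_of_nonpos (a := x - 1/2) (by linarith)] at hh
    rw [tent_of_le_half hx, tent_of_le_half (by linarith), ← mul_sub, add_sub_cancel_left,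
      abs_mul, abs_two]
  · rw [abs_of_nonneg (a := x - 1/2) (by linarith)] at hh
    rw [tent_of_half_le hx, tent_of_half_le (by linarith), sub_sub_sub_cancel_left, ← mul_sub,
      sub_add_cancel_left, abs_mul, abs_two, abs_neg]

lemma iterate_succ_tent_add_eq {x δ : ℝ} {M : ℕ}
    (hloc : ∀ h, |h| ≤ δ → tent^[M] (tent x + h) = 2^M * |h|) {h : ℝ} (hδ : |h| ≤ δ/2)
    (hx : |h| ≤ |x - 1/2|) : tent^[M+1] (x + h) = 2^(M+1) * |h| := by
  have hstep := abs_tent_add_sub_tent hx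
  rw [Function.iterate_succ_apply, ← add_sub_cancel (tent x) (tent (x + h)),
    hloc _ (by linarith), hstep, pow_succ]
  ring

lemma iterate_tent_half_add_eq {h : ℝ} (hh : |h| ≤ 1/4) : tent^[2] (1/2 + h) = 2^2 * |h| := by
  have h1 : tent (1/2 + h) = 1 - 2*|h| := by
    rcases le_total h 0 with hneg | hpos
    · rw [tent_of_le_half (by linarith), abs_of_nonpos hneg]; ring
    · rw [tent_of_half_le (by linarith), abs_of_nonneg hpos]; ring
  rw [Function.iterate_succ_apply', Function.iterate_one, h1, tent_of_half_le (by linarith)]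
  ring

lemma exists_iterate_tent_add_eq_of_dyadic {m : ℕ} {k : ℤ} {x : ℝ} (hx : x ∈ Ioo 0 1)
    (hk : x = k / 2^m) :
    ∃ M : ℕ, ∃ δ > 0, ∀ h : ℝ, |h| ≤ δ → tent^[M] (x + h) = 2^M * |h| := by
  induction m generalizing k x with
  | zero =>
    obtain ⟨hx0, hx1⟩ := hx
    rw [hk, pow_zero, div_one] at hx0 hx1
    have : (0:ℤ) < k ∧ k < 1 := ⟨by exact_mod_cast hx0, by exact_mod_cast hx1⟩
    omega
  | succ m ih =>
    rcases eq_or_ne x (1/2) with rfl | hhalf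
    · exact ⟨2, 1/4, by norm_num, fun h hh => iterate_tent_half_add_eq hh⟩
    obtain ⟨k', hk'⟩ : ∃ k' : ℤ, tent x = k' / 2^m := by
      rcases le_total x (1/2) with h | h
      · exact ⟨k, by rw [tent_of_le_half h, hk, pow_succ]; field_simp⟩
      · exact ⟨2^(m+1) - k, by rw [tent_of_half_le h, hk]; push_cast; rw [pow_succ]; field_simp⟩
    obtain ⟨M, δ, hδ, hloc⟩ := ih (tent_mem_Ioo hx hhalf) hk'
    refine ⟨M + 1, min (δ/2) |x - 1/2|, lt_min (by linarith) (abs_pos.mpr (sub_ne_zero.mpr hhalf)),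
      fun h hh => ?_⟩
    exact iterate_succ_tent_add_eq hloc (hh.trans (min_le_left _ _)) (hh.trans (min_le_right _ _))

lemma abs_takagi_add_sub_le {x δ : ℝ} {M : ℕ} (hx : x ∈ Icc (0:ℝ) 1)
    (hloc : ∀ h : ℝ, |h| ≤ δ → tent^[M] (x + h) = 2^M * |h|) {h : ℝ} (h0 : h ≠ 0) (hδ : |h| ≤ δ)
    (hxh : x + h ∈ Icc (0:ℝ) 1) :
    |takagi (x + h) - takagi x - |h| * Real.logb 2 (1/|h|)| ≤ (2*M + 3) * |h| := by
  have hpos : 0 < |h| := abs_pos.mpr h0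
  have hx0 : tent^[M] x = 0 := by simpa using hloc 0 (by simpa using hpos.le.trans hδ)
  have ht := (mapsTo_tent.iterate M) hxh
  rw [hloc h hδ] at ht
  have hlog : Real.logb 2 (1 / (2^M * |h|)) = Real.logb 2 (1/|h|) - M := by
    rw [mul_comm, ← div_div, Real.logb_div (by positivity) (by positivity), Real.logb_pow,
      Real.logb_self_eq_one one_lt_two, mul_one]
  have hnear_zero := abs_takagi_sub_mul_logb_le (by positivity) ht.2
  rw [hlog] at hnear_zero
  have hpart := abs_takagiPartial_sub_le M (x + h) x
  rw [add_sub_cancel_left] at hpart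
  rw [takagi_eq_takagiPartial_add hxh M, takagi_eq_takagiPartial_add hx M, hloc h hδ, hx0,
    takagi_zero, zero_div, add_zero]
  have h2M : (0:ℝ) < 2^M := by positivity
  have hsplit : takagiPartial M (x + h) + takagi (2^M * |h|) / 2^M - takagiPartial M x
      - |h| * Real.logb 2 (1/|h|)
      = (takagiPartial M (x + h) - takagiPartial M x)
        + (takagi (2^M * |h|) - 2^M * |h| * (Real.logb 2 (1/|h|) - M)) / 2^M - M * |h| := by
    field_simp
    ring
  have hrest : |(takagi (2^M * |h|) - 2^M * |h| * (Real.logb 2 (1/|h|) - M)) / 2^M| ≤ 3 * |h| := by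
    rw [abs_div, abs_of_pos h2M, div_le_iff₀ h2M]
    linarith
  rw [hsplit]
  obtain ⟨hp₁, hp₂⟩ := abs_le.mp hpart
  obtain ⟨hr₁, hr₂⟩ := abs_le.mp hrest
  rw [abs_le]
  constructor <;> linarith

lemma tendsto_div_mul_of_abs_sub_mul_le {α : Type*} {l : Filter α} {f a g : α → ℝ} {C : ℝ}
    (hg : Tendsto g l atTop) (ha : ∀ᶠ y in l, 0 < a y)
    (hf : ∀ᶠ y in l, |f y - a y * g y| ≤ C * a y) :
    Tendsto (fun y => f y / (a y * g y)) l (𝓝 1) := by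
  rw [← tendsto_sub_nhds_zero_iff]
  refine squeeze_zero_norm' ?_ (hg.const_div_atTop C)
  filter_upwards [ha, hf, hg.eventually_gt_atTop 0] with y hay hfy hgy
  have hag : 0 < a y * g y := mul_pos hay hgy
  rw [Real.norm_eq_abs, div_sub_one hag.ne', abs_div, abs_of_pos hag, div_le_div_iff₀ hag hgy]
  nlinarith

lemma tendsto_logb_one_div_abs_nhdsNE_zero :
    Tendsto (fun h : ℝ => Real.logb 2 (1/|h|)) (𝓝[≠] 0) atTop := by
  refine (tendsto_neg_atBot_atTop.comp (Real.tendsto_logb_nhdsNE_zero one_lt_two)).congr fun h => ?_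
  simp [Real.logb_inv, Real.logb_abs]

theorem takagi_modulus_dyadic (x : ℝ) (hx : x ∈ Set.Ioo (0:ℝ) 1)
    (hdy : ∃ k : ℤ, ∃ m : ℕ, x = (k : ℝ) / 2^m) :
    Tendsto (fun h => (takagi (x + h) - takagi x) / (|h| * Real.logb 2 (1/|h|)))
      (𝓝[≠] (0:ℝ)) (𝓝 1) := by
  obtain ⟨k, m, hk⟩ := hdy
  obtain ⟨M, δ, hδ, hloc⟩ := exists_iterate_tent_add_eq_of_dyadic hx hk
  have hsmall : ∀ᶠ h in 𝓝[≠] (0:ℝ), |h| < min δ (min x (1 - x)) :=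
    ((continuous_abs.tendsto' 0 0 abs_zero).eventually
      (eventually_lt_nhds (lt_min hδ (lt_min hx.1 (sub_pos.mpr hx.2))))).filter_mono
      nhdsWithin_le_nhds
  refine tendsto_div_mul_of_abs_sub_mul_le (C := 2*M + 3) tendsto_logb_one_div_abs_nhdsNE_zero
    (eventually_nhdsWithin_of_forall fun h h0 => abs_pos.mpr h0) ?_
  filter_upwards [hsmall, self_mem_nhdsWithin] with h hh h0
  obtain ⟨hhδ, hhx, hhx'⟩ : |h| < δ ∧ |h| < x ∧ |h| < 1 - x := by simpa using hh
  have hxh : x + h ∈ Icc (0:ℝ) 1 := by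
    constructor <;> linarith [neg_abs_le h, le_abs_self h]
  exact abs_takagi_add_sub_le (Ioo_subset_Icc_self hx) hloc h0 hhδ.le hxh
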